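/- arXiv:2307.03086 — 9 statements merged into one kernel-verified Lean document; each statement's English description precedes it below -/
import Mathlib

section
/- For every nonzero complex number m and every positive integer n, the sum over k from 1 to n of ((256m-27)k^3 - 3(128m+9)k^2 + 2(88m-3)k - 24m) / (k * m^k * binomial(4k, k)) equals 6 - 3(3n+1)(3n+2) / (m^n * binomial(4n, n)). -/
lemma choose_ratio (j : ℕ) :
    ((4*(j+1)).choose (j+1) : ℂ) * (((j:ℂ)+1)*(3*(j:ℂ)+3)*(3*(j:ℂ)+2)*(3*(j:ℂ)+1)) =
    ((4*j).choose j : ℂ) * ((4*(j:ℂ)+4)*(4*(j:ℂ)+3)*(4*(j:ℂ)+2)*(4*(j:ℂ)+1)) := by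
  have h1 := Nat.choose_mul_factorial_mul_factorial (show j ≤ 4*j by omega)
  have h2 := Nat.choose_mul_factorial_mul_factorial (show j+1 ≤ 4*(j+1) by omega)
  rw [show 4*j - j = 3*j by omega] at h1
  rw [show 4*(j+1) - (j+1) = 3*j+3 by omega] at h2
  rw [show (4*(j+1)).factorial = (4*j+4)*((4*j+3)*((4*j+2)*((4*j+1)*(4*j).factorial))) by
    rw [show 4*(j+1) = (4*j+3)+1 by ring, Nat.factorial_succ, show 4*j+3 = (4*j+2)+1 by ring,
      Nat.factorial_succ, show 4*j+2 = (4*j+1)+1 by ring, Nat.factorial_succ,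
      Nat.factorial_succ]] at h2
  rw [show (3*j+3).factorial = (3*j+3)*((3*j+2)*((3*j+1)*(3*j).factorial)) by
    rw [show 3*j+3 = (3*j+2)+1 by ring, Nat.factorial_succ, show 3*j+2 = (3*j+1)+1 by ring,
      Nat.factorial_succ, Nat.factorial_succ], Nat.factorial_succ] at h2
  have h1c : ((4*j).choose j : ℂ) * (j.factorial : ℂ) * ((3*j).factorial : ℂ)
      = ((4*j).factorial : ℂ) := by exact_mod_cast congrArg (Nat.cast (R := ℂ)) h1
  have h2c : ((4*(j+1)).choose (j+1) : ℂ) * (((j:ℂ)+1) * (j.factorial : ℂ)) *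
      ((3*(j:ℂ)+3)*((3*(j:ℂ)+2)*((3*(j:ℂ)+1)*((3*j).factorial : ℂ)))) =
      (4*(j:ℂ)+4)*((4*(j:ℂ)+3)*((4*(j:ℂ)+2)*((4*(j:ℂ)+1)*((4*j).factorial : ℂ)))) := by
    exact_mod_cast congrArg (Nat.cast (R := ℂ)) h2
  have hfj : (j.factorial : ℂ) ≠ 0 := Nat.cast_ne_zero.mpr (Nat.factorial_ne_zero j)
  have hf3 : ((3*j).factorial : ℂ) ≠ 0 := Nat.cast_ne_zero.mpr (Nat.factorial_ne_zero _)
  apply mul_right_cancel₀ (mul_ne_zero hfj hf3)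
  linear_combination h2c - ((4*(j:ℂ)+4)*(4*(j:ℂ)+3)*(4*(j:ℂ)+2)*(4*(j:ℂ)+1)) * h1c

lemma choose4_ne (j : ℕ) : ((4*j).choose j : ℂ) ≠ 0 :=
  Nat.cast_ne_zero.mpr (Nat.choose_pos (by omega)).ne'

lemma star_lem (m : ℂ) (j : ℕ) :
    ((256*m-27)*((j:ℂ)+1)^3 - 3*(128*m+9)*((j:ℂ)+1)^2 + 2*(88*m-3)*((j:ℂ)+1) - 24*m) *
      ((4*j).choose j : ℂ) =
    3*(3*(j:ℂ)+1)*(3*(j:ℂ)+2)*m*((j:ℂ)+1)*((4*(j+1)).choose (j+1) : ℂ)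
      - 3*(3*((j:ℂ)+1)+1)*(3*((j:ℂ)+1)+2)*((j:ℂ)+1)*((4*j).choose j : ℂ) := by
  have key := choose_ratio j
  have h3 : (3*(j:ℂ)+3) ≠ 0 := by
    have : (3*(j:ℂ)+3) = ((3*j+3 : ℕ) : ℂ) := by push_cast; ring
    rw [this]; exact Nat.cast_ne_zero.mpr (by omega)
  apply mul_right_cancel₀ h3
  linear_combination (-3*m) * key

lemma step_lem (m : ℂ) (hm : m ≠ 0) (j : ℕ) :
    ((256*m-27)*((j:ℂ)+1)^3 - 3*(128*m+9)*((j:ℂ)+1)^2 + 2*(88*m-3)*((j:ℂ)+1) - 24*m) /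
      (((j:ℂ)+1) * m^(j+1) * ((4*(j+1)).choose (j+1) : ℂ)) =
    3*(3*(j:ℂ)+1)*(3*(j:ℂ)+2) / (m^j * ((4*j).choose j : ℂ)) -
    3*(3*((j:ℂ)+1)+1)*(3*((j:ℂ)+1)+2) / (m^(j+1) * ((4*(j+1)).choose (j+1) : ℂ)) := by
  have hA := choose4_ne j
  have hB := choose4_ne (j+1)
  have hj1 : ((j:ℂ)+1) ≠ 0 := by
    have : ((j:ℂ)+1) = ((j+1 : ℕ) : ℂ) := by push_cast; ring
    rw [this]; exact Nat.cast_ne_zero.mpr (Nat.succ_ne_zero j)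
  have hmj : m^j ≠ 0 := pow_ne_zero _ hm
  have hmj1 : m^(j+1) ≠ 0 := pow_ne_zero _ hm
  have star := star_lem m j
  rw [div_sub_div _ _ (mul_ne_zero hmj hA) (mul_ne_zero hmj1 hB),
    div_eq_div_iff (mul_ne_zero (mul_ne_zero hj1 hmj1) hB)
      (mul_ne_zero (mul_ne_zero hmj hA) (mul_ne_zero hmj1 hB))]
  linear_combination (m^j * m^(j+1) * ((4*(j+1)).choose (j+1) : ℂ)) * star

theorem stmt_0 (m : ℂ) (hm : m ≠ 0) (n : ℕ) (hn : 0 < n) :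
    ∑ k ∈ Finset.Icc 1 n,
      ((256*m-27)*(k:ℂ)^3 - 3*(128*m+9)*(k:ℂ)^2 + 2*(88*m-3)*(k:ℂ) - 24*m) /
        ((k:ℂ) * m^k * (Nat.choose (4*k) k : ℂ)) =
    6 - 3*(3*(n:ℂ)+1)*(3*(n:ℂ)+2) / (m^n * (Nat.choose (4*n) n : ℂ)) := by
  induction n with
  | zero => omega
  | succ p ih =>
    rcases Nat.eq_zero_or_pos p with hp | hp
    · subst hp
      rw [Finset.Icc_self, Finset.sum_singleton]
      have h := step_lem m hm 0
      norm_num at h ⊢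
      exact h
    · rw [Finset.sum_Icc_succ_top (by omega : 1 ≤ p+1), ih hp]
      have h := step_lem m hm p
      push_cast at h ⊢
      rw [h]
      ring
end

section
/- For every nonzero complex number m and every positive integer n, the sum over k from 1 to n of ((256m-27)k^3 - 2(64m+27)k^2 - (16m+33)k + 8m - 6) / ((4k+1) * m^k * binomial(4k, k)) equals 6 - 3(n+1)(3n+1)(3n+2) / ((4n+1) * m^n * binomial(4n, n)). -/
lemma keyC (n : ℕ) :
    ((n:ℂ)+1)*(3*(n:ℂ)+1)*(3*(n:ℂ)+2)*(3*(n:ℂ)+3)*(Nat.choose (4*(n+1)) (n+1) : ℂ) =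
    (4*(n:ℂ)+1)*(4*(n:ℂ)+2)*(4*(n:ℂ)+3)*(4*(n:ℂ)+4)*(Nat.choose (4*n) n : ℂ) := by
  have h1 := Nat.choose_mul_factorial_mul_factorial (show n ≤ 4*n by omega)
  have h2 := Nat.choose_mul_factorial_mul_factorial (show n+1 ≤ 4*(n+1) by omega)
  have e1 : 4*n - n = 3*n := by omega
  have e2 : 4*(n+1) - (n+1) = 3*n+3 := by omega
  rw [e1] at h1
  rw [e2] at h2
  have f1 : Nat.factorial (n+1) = (n+1) * Nat.factorial n := rfl
  have f3 : Nat.factorial (3*n+3) = (3*n+3)*((3*n+2)*((3*n+1)*Nat.factorial (3*n))) := by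
    rw [show 3*n+3 = (3*n+2)+1 by omega, Nat.factorial_succ,
        show 3*n+2 = (3*n+1)+1 by omega, Nat.factorial_succ,
        show 3*n+1 = (3*n)+1 by omega, Nat.factorial_succ]
  have f4 : Nat.factorial (4*(n+1)) = (4*n+4)*((4*n+3)*((4*n+2)*((4*n+1)*Nat.factorial (4*n)))) := by
    rw [show 4*(n+1) = (4*n+3)+1 by omega, Nat.factorial_succ,
        show 4*n+3 = (4*n+2)+1 by omega, Nat.factorial_succ,
        show 4*n+2 = (4*n+1)+1 by omega, Nat.factorial_succ,
        show 4*n+1 = (4*n)+1 by omega, Nat.factorial_succ]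
  rw [f1, f3, f4] at h2
  have hfn : ((Nat.factorial n : ℂ)) ≠ 0 := Nat.cast_ne_zero.mpr (Nat.factorial_ne_zero n)
  have hf3n : ((Nat.factorial (3*n) : ℂ)) ≠ 0 := Nat.cast_ne_zero.mpr (Nat.factorial_ne_zero _)
  have h1C : (Nat.choose (4*n) n : ℂ) * (Nat.factorial n : ℂ) * (Nat.factorial (3*n) : ℂ)
      = (Nat.factorial (4*n) : ℂ) := by exact_mod_cast h1
  have h2C : (Nat.choose (4*(n+1)) (n+1) : ℂ) * (((n:ℂ)+1) * (Nat.factorial n : ℂ)) *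
      ((3*(n:ℂ)+3)*((3*(n:ℂ)+2)*((3*(n:ℂ)+1)*(Nat.factorial (3*n) : ℂ))))
      = (4*(n:ℂ)+4)*((4*(n:ℂ)+3)*((4*(n:ℂ)+2)*((4*(n:ℂ)+1)*(Nat.factorial (4*n) : ℂ)))) := by
    exact_mod_cast h2
  apply mul_right_cancel₀ (mul_ne_zero hfn hf3n)
  linear_combination h2C - (4*(n:ℂ)+1)*(4*(n:ℂ)+2)*(4*(n:ℂ)+3)*(4*(n:ℂ)+4) * h1C

lemma castpos_ne (a b n : ℕ) (hb : 0 < b) : ((a:ℂ)*(n:ℂ)+(b:ℂ)) ≠ 0 := by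
  have h : ((a*n+b : ℕ):ℂ) ≠ 0 := Nat.cast_ne_zero.mpr (by omega)
  push_cast at h; exact h

theorem stmt_1 (m : ℂ) (hm : m ≠ 0) (n : ℕ) (hn : 0 < n) :
    ∑ k ∈ Finset.Icc 1 n,
      ((256*m-27)*(k:ℂ)^3 - 2*(64*m+27)*(k:ℂ)^2 - (16*m+33)*(k:ℂ) + 8*m - 6) /
        ((4*(k:ℂ)+1) * m^k * (Nat.choose (4*k) k : ℂ)) =
    6 - 3*((n:ℂ)+1)*(3*(n:ℂ)+1)*(3*(n:ℂ)+2) / ((4*(n:ℂ)+1) * m^n * (Nat.choose (4*n) n : ℂ)) := by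
  induction n, hn using Nat.le_induction with
  | base =>
    rw [Finset.Icc_self, Finset.sum_singleton]
    norm_num [Nat.choose]
    field_simp
    ring
  | succ n hn ih =>
    rw [Finset.sum_Icc_succ_top (by omega : 1 ≤ n+1), ih]
    have hC : (Nat.choose (4*n) n : ℂ) ≠ 0 :=
      Nat.cast_ne_zero.mpr (Nat.choose_pos (by omega)).ne'
    have hC' : (Nat.choose (4*(n+1)) (n+1) : ℂ) ≠ 0 :=
      Nat.cast_ne_zero.mpr (Nat.choose_pos (by omega)).ne'
    have h1 : (4*(n:ℂ)+1) ≠ 0 := by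
      have : ((4*n+1 : ℕ) : ℂ) ≠ 0 := Nat.cast_ne_zero.mpr (by omega)
      push_cast at this; exact this
    have h2 : (4*((n:ℂ)+1)+1) ≠ 0 := by
      have := castpos_ne 4 5 n (by norm_num); push_cast at this
      intro h; exact this (by linear_combination h)
    have h3 : (4*(n:ℂ)+2) ≠ 0 := by have := castpos_ne 4 2 n (by norm_num); push_cast at this; exact this
    have h4 : (4*(n:ℂ)+3) ≠ 0 := by have := castpos_ne 4 3 n (by norm_num); push_cast at this; exact this
    have h5 : (4*(n:ℂ)+4) ≠ 0 := by have := castpos_ne 4 4 n (by norm_num); push_cast at this; exact this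
    have h6 : (4*(n:ℂ)+5) ≠ 0 := by have := castpos_ne 4 5 n (by norm_num); push_cast at this; exact this
    have h7 : ((n:ℂ)+1) ≠ 0 := by have := castpos_ne 1 1 n (by norm_num); push_cast at this; intro h; exact this (by linear_combination h)
    have h8 : (3*(n:ℂ)+1) ≠ 0 := by have := castpos_ne 3 1 n (by norm_num); push_cast at this; exact this
    have h9 : (3*(n:ℂ)+2) ≠ 0 := by have := castpos_ne 3 2 n (by norm_num); push_cast at this; exact this
    have h10 : (3*(n:ℂ)+3) ≠ 0 := by have := castpos_ne 3 3 n (by norm_num); push_cast at this; exact this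
    have hA : (((n:ℂ)+1)*(3*(n:ℂ)+1)*(3*(n:ℂ)+2)*(3*(n:ℂ)+3)) ≠ 0 := by
      have : (((n+1)*(3*n+1)*(3*n+2)*(3*n+3) : ℕ) : ℂ) ≠ 0 := Nat.cast_ne_zero.mpr (by positivity)
      push_cast at this
      intro h; apply this; linear_combination h
    have hCeq : (Nat.choose (4*(n+1)) (n+1) : ℂ) =
        (4*(n:ℂ)+1)*(4*(n:ℂ)+2)*(4*(n:ℂ)+3)*(4*(n:ℂ)+4)*(Nat.choose (4*n) n : ℂ) /
          (((n:ℂ)+1)*(3*(n:ℂ)+1)*(3*(n:ℂ)+2)*(3*(n:ℂ)+3)) := by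
      rw [eq_div_iff hA]; linear_combination keyC n
    have hmn : m^n ≠ 0 := pow_ne_zero _ hm
    have hD : (4*(n:ℂ)+1) * m^n * (Nat.choose (4*n) n : ℂ) ≠ 0 :=
      mul_ne_zero (mul_ne_zero h1 hmn) hC
    have hEC' : (4*((n:ℂ)+1)+1) * m^(n+1) * (Nat.choose (4*(n+1)) (n+1) : ℂ) ≠ 0 :=
      mul_ne_zero (mul_ne_zero h2 (pow_ne_zero _ hm)) hC'
    push_cast
    have haux :
        ((256*m-27)*((n:ℂ)+1)^3 - 2*(64*m+27)*((n:ℂ)+1)^2 - (16*m+33)*((n:ℂ)+1) + 8*m - 6) /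
          ((4*((n:ℂ)+1)+1) * m^(n+1) * (Nat.choose (4*(n+1)) (n+1) : ℂ)) =
        3*((n:ℂ)+1)*(3*(n:ℂ)+1)*(3*(n:ℂ)+2) / ((4*(n:ℂ)+1) * m^n * (Nat.choose (4*n) n : ℂ)) -
        3*((n:ℂ)+1+1)*(3*((n:ℂ)+1)+1)*(3*((n:ℂ)+1)+2) /
          ((4*((n:ℂ)+1)+1) * m^(n+1) * (Nat.choose (4*(n+1)) (n+1) : ℂ)) := by
      rw [eq_sub_iff_add_eq, ← add_div, div_eq_div_iff hEC' hD]
      apply mul_right_cancel₀ hA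
      linear_combination
        (-(3*((n:ℂ)+1)*(3*(n:ℂ)+1)*(3*(n:ℂ)+2))*(4*(n:ℂ)+5)*m^(n+1)) * keyC n
    linear_combination haux
end

section
/- For every nonzero complex number m and every positive integer n, the sum over k from 1 to n of ((256m-27)k^3 - 3(128m-9)k^2 + 2(88m-3)k - 24m) / (k(3k-1)(3k-2) * m^k * binomial(4k, k)) equals 3 - 3 / (m^n * binomial(4n, n)). -/
lemma key3 (i : ℕ) :
    3 * ((Nat.choose (4*(i+1)) (i+1) : ℂ)) * (((i:ℂ)+1)*(3*(i:ℂ)+1)*(3*(i:ℂ)+2)) =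
    4 * ((Nat.choose (4*i) i : ℂ)) * ((4*(i:ℂ)+1)*(4*(i:ℂ)+2)*(4*(i:ℂ)+3)) := by
  have h1 := Nat.choose_mul_factorial_mul_factorial (show i ≤ 4*i by omega)
  have h2 := Nat.choose_mul_factorial_mul_factorial (show i+1 ≤ 4*(i+1) by omega)
  have e1 : 4*i - i = 3*i := by omega
  have e2 : 4*(i+1) - (i+1) = 3*i+3 := by omega
  rw [e1] at h1; rw [e2] at h2
  have f1 : (4*(i+1)).factorial = (4*i+4)*((4*i+3)*((4*i+2)*((4*i+1)*(4*i).factorial))) := by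
    have : 4*(i+1) = 4*i+4 := by omega
    rw [this, Nat.factorial_succ, Nat.factorial_succ, Nat.factorial_succ, Nat.factorial_succ]
  have f2 : (3*i+3).factorial = (3*i+3)*((3*i+2)*((3*i+1)*(3*i).factorial)) := by
    rw [Nat.factorial_succ, Nat.factorial_succ, Nat.factorial_succ]
  have f3 : (i+1).factorial = (i+1)*i.factorial := Nat.factorial_succ i
  rw [f1, f2, f3] at h2
  have c1 : (Nat.choose (4*i) i : ℂ) * (i.factorial : ℂ) * ((3*i).factorial : ℂ) = ((4*i).factorial : ℂ) := by
    exact_mod_cast congrArg (Nat.cast : ℕ → ℂ) h1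
  have c2 : (Nat.choose (4*(i+1)) (i+1) : ℂ) * (((i:ℂ)+1)*(i.factorial:ℂ)) *
      ((3*(i:ℂ)+3)*((3*(i:ℂ)+2)*((3*(i:ℂ)+1)*((3*i).factorial:ℂ)))) =
      (4*(i:ℂ)+4)*((4*(i:ℂ)+3)*((4*(i:ℂ)+2)*((4*(i:ℂ)+1)*((4*i).factorial:ℂ)))) := by
    exact_mod_cast congrArg (Nat.cast : ℕ → ℂ) h2
  have nz1 : (i.factorial : ℂ) ≠ 0 := Nat.cast_ne_zero.mpr i.factorial_ne_zero
  have nz2 : ((3*i).factorial : ℂ) ≠ 0 := Nat.cast_ne_zero.mpr (3*i).factorial_ne_zero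
  have nz3 : (3*(i:ℂ)+3) ≠ 0 := by
    have : ((3*i+3 : ℕ) : ℂ) ≠ 0 := Nat.cast_ne_zero.mpr (by omega)
    push_cast at this; exact this
  apply mul_right_cancel₀ (mul_ne_zero (mul_ne_zero nz1 nz2) nz3)
  linear_combination 3 * c2 - 4*((4*(i:ℂ))+1)*((4*(i:ℂ))+2)*((4*(i:ℂ))+3)*(3*(i:ℂ)+3) * c1

lemma term3 (m : ℂ) (hm : m ≠ 0) (i : ℕ) :
    ((256*m-27)*((1+i : ℕ):ℂ)^3 - 3*(128*m-9)*((1+i : ℕ):ℂ)^2 + 2*(88*m-3)*((1+i : ℕ):ℂ) - 24*m) /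
        (((1+i : ℕ):ℂ)*(3*((1+i : ℕ):ℂ)-1)*(3*((1+i : ℕ):ℂ)-2) * m^(1+i) * (Nat.choose (4*(1+i)) (1+i) : ℂ)) =
    3 / (m^i * (Nat.choose (4*i) i : ℂ)) - 3 / (m^(i+1) * (Nat.choose (4*(i+1)) (i+1) : ℂ)) := by
  have hk := key3 i
  have na : ((Nat.choose (4*i) i : ℕ) : ℂ) ≠ 0 :=
    Nat.cast_ne_zero.mpr (Nat.choose_pos (by omega)).ne'
  have nb : ((Nat.choose (4*(i+1)) (i+1) : ℕ) : ℂ) ≠ 0 :=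
    Nat.cast_ne_zero.mpr (Nat.choose_pos (by omega)).ne'
  have n1 : ((i:ℂ)+1) ≠ 0 := by
    have : ((i+1 : ℕ) : ℂ) ≠ 0 := Nat.cast_ne_zero.mpr (by omega)
    push_cast at this; exact this
  have n2 : (3*(i:ℂ)+1) ≠ 0 := by
    have : ((3*i+1 : ℕ) : ℂ) ≠ 0 := Nat.cast_ne_zero.mpr (by omega)
    push_cast at this; exact this
  have n3 : (3*(i:ℂ)+2) ≠ 0 := by
    have : ((3*i+2 : ℕ) : ℂ) ≠ 0 := Nat.cast_ne_zero.mpr (by omega)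
    push_cast at this; exact this
  have nm : m^i ≠ 0 := pow_ne_zero _ hm
  have nm1 : m^(i+1) ≠ 0 := pow_ne_zero _ hm
  have h1i : (1+i) = (i+1) := by omega
  rw [h1i]
  push_cast
  have e1 : 3*((i:ℂ)+1)-1 = 3*(i:ℂ)+2 := by ring
  have e2 : 3*((i:ℂ)+1)-2 = 3*(i:ℂ)+1 := by ring
  rw [e1, e2]
  rw [div_sub_div _ _ (mul_ne_zero nm na) (mul_ne_zero nm1 nb),
    div_eq_div_iff
      (mul_ne_zero (mul_ne_zero (mul_ne_zero (mul_ne_zero n1 n3) n2) nm1) nb)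
      (mul_ne_zero (mul_ne_zero nm na) (mul_ne_zero nm1 nb))]
  linear_combination (-(m^(i+1)*m^(i+1)*((Nat.choose (4*(i+1)) (i+1) : ℕ):ℂ))) * hk

theorem stmt_3 (m : ℂ) (hm : m ≠ 0) (n : ℕ) (hn : 0 < n) :
    ∑ k ∈ Finset.Icc 1 n,
      ((256*m-27)*(k:ℂ)^3 - 3*(128*m-9)*(k:ℂ)^2 + 2*(88*m-3)*(k:ℂ) - 24*m) /
        ((k:ℂ)*(3*(k:ℂ)-1)*(3*(k:ℂ)-2) * m^k * (Nat.choose (4*k) k : ℂ)) =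
    3 - 3 / (m^n * (Nat.choose (4*n) n : ℂ)) := by
  rw [← Finset.Ico_add_one_right_eq_Icc, Finset.sum_Ico_eq_sum_range]
  have hrange : n + 1 - 1 = n := by omega
  rw [hrange]
  have : ∀ i ∈ Finset.range n,
      ((256*m-27)*((1+i : ℕ):ℂ)^3 - 3*(128*m-9)*((1+i : ℕ):ℂ)^2 + 2*(88*m-3)*((1+i : ℕ):ℂ) - 24*m) /
        (((1+i : ℕ):ℂ)*(3*((1+i : ℕ):ℂ)-1)*(3*((1+i : ℕ):ℂ)-2) * m^(1+i) * (Nat.choose (4*(1+i)) (1+i) : ℂ)) =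
      (fun j => 3 / (m^j * (Nat.choose (4*j) j : ℂ))) i -
      (fun j => 3 / (m^j * (Nat.choose (4*j) j : ℂ))) (i+1) := by
    intro i _
    exact term3 m hm i
  rw [Finset.sum_congr rfl this, Finset.sum_range_sub' (fun j => 3 / (m^j * (Nat.choose (4*j) j : ℂ))) n]
  simp
end

section
/- For every nonzero complex number m and every nonnegative integer n, the sum over k from 0 to n of ((256-27m)k^3 + 384k^2 + (176+21m)k - 6m + 24) * binomial(4k, k) / ((k+1) * m^k) equals -6m + 8(2n+1)(4n+1)(4n+3) * binomial(4n, n) / ((n+1) * m^n). -/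
lemma alg (x a b F0 F3 : ℂ) (hF0 : F0 ≠ 0) (hF3 : F3 ≠ 0)
    (E1 : a * ((x+1)*F0) * ((3*x+3)*((3*x+2)*((3*x+1)*F3))) =
      (4*x+4)*((4*x+3)*((4*x+2)*((4*x+1)*(b*F0*F3))))) :
    a * ((x+1) * (3*x+1) * (3*x+2) * (3*x+3)) =
    b * ((4*x+1) * (4*x+2) * (4*x+3) * (4*x+4)) := by
  apply mul_right_cancel₀ (mul_ne_zero hF0 hF3)
  linear_combination E1

lemma key (n : ℕ) :
    (Nat.choose (4*(n+1)) (n+1) : ℂ) * (((n:ℂ)+1) * (3*n+1) * (3*n+2) * (3*n+3)) =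
    (Nat.choose (4*n) n : ℂ) * ((4*n+1) * (4*n+2) * (4*n+3) * (4*n+4)) := by
  have h1 : (n+1) ≤ 4*(n+1) := by omega
  have h2 : n ≤ 4*n := by omega
  have A1 := Nat.choose_mul_factorial_mul_factorial h1
  have A2 := Nat.choose_mul_factorial_mul_factorial h2
  rw [show 4*(n+1) - (n+1) = 3*n+3 from by omega] at A1
  rw [show 4*n - n = 3*n from by omega] at A2
  have f1 : (4*(n+1)).factorial = (4*n+4)*((4*n+3)*((4*n+2)*((4*n+1)*(4*n).factorial))) := by
    rw [show 4*(n+1) = (4*n+3)+1 from by ring, Nat.factorial_succ]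
    rw [show 4*n+3 = (4*n+2)+1 from rfl, Nat.factorial_succ]
    rw [show 4*n+2 = (4*n+1)+1 from rfl, Nat.factorial_succ]
    rw [show 4*n+1 = (4*n)+1 from rfl, Nat.factorial_succ]
  have f2 : (n+1).factorial = (n+1)*n.factorial := Nat.factorial_succ n
  have f3 : (3*n+3).factorial = (3*n+3)*((3*n+2)*((3*n+1)*(3*n).factorial)) := by
    rw [show 3*n+3 = (3*n+2)+1 from rfl, Nat.factorial_succ]
    rw [show 3*n+2 = (3*n+1)+1 from rfl, Nat.factorial_succ]
    rw [show 3*n+1 = (3*n)+1 from rfl, Nat.factorial_succ]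
  have N1 : (4*(n+1)).choose (n+1) * ((n+1)*n.factorial) *
      ((3*n+3)*((3*n+2)*((3*n+1)*(3*n).factorial))) =
      (4*n+4)*((4*n+3)*((4*n+2)*((4*n+1)*((4*n).choose n * n.factorial * (3*n).factorial)))) := by
    rw [← f2, ← f3, A1, A2, f1]
  apply alg (n:ℂ) _ _ (n.factorial : ℂ) ((3*n).factorial : ℂ)
    (Nat.cast_ne_zero.2 n.factorial_ne_zero) (Nat.cast_ne_zero.2 (3*n).factorial_ne_zero)
  exact_mod_cast congrArg (Nat.cast : ℕ → ℂ) N1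
set_option maxHeartbeats 1000000 in
lemma alg2 (N M MP C C' : ℂ) (hM : M ≠ 0) (hMP : MP ≠ 0) (h1 : N+1 ≠ 0) (h2 : N+2 ≠ 0)
    (hk : C' * ((N+1) * (3*N+1) * (3*N+2) * (3*N+3)) =
      C * ((4*N+1) * (4*N+2) * (4*N+3) * (4*N+4))) :
    -6*M + 8*(2*N+1)*(4*N+1)*(4*N+3)*C/((N+1)*MP)
      + ((256-27*M)*(N+1)^3+384*(N+1)^2+(176+21*M)*(N+1)-6*M+24)*C'/((N+1+1)*(MP*M))
    = -6*M + 8*(2*(N+1)+1)*(4*(N+1)+1)*(4*(N+1)+3)*C'/((N+1+1)*(MP*M)) := by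
  have h2' : N+1+1 ≠ 0 := by rw [show N+1+1 = N+2 from by ring]; exact h2
  apply mul_left_cancel₀ h1
  field_simp
  apply mul_left_cancel₀ h1
  linear_combination (-(M*(N+2))) * hk

theorem stmt_4 (m : ℂ) (hm : m ≠ 0) (n : ℕ) :
    ∑ k ∈ Finset.range (n+1),
      ((256-27*m)*(k:ℂ)^3 + 384*(k:ℂ)^2 + (176+21*m)*(k:ℂ) - 6*m + 24) *
        (Nat.choose (4*k) k : ℂ) / (((k:ℂ)+1) * m^k) =
    -6*m + 8*(2*(n:ℂ)+1)*(4*(n:ℂ)+1)*(4*(n:ℂ)+3) * (Nat.choose (4*n) n : ℂ) /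
      (((n:ℂ)+1) * m^n) := by
  induction n with
  | zero => simp; ring
  | succ n ih =>
    rw [Finset.sum_range_succ, ih]
    have z1 : ((n:ℂ)+1) ≠ 0 := by
      have h : ((n+1 : ℕ):ℂ) ≠ 0 := Nat.cast_ne_zero.2 (by omega)
      push_cast at h; exact h
    have z2 : ((n:ℂ)+2) ≠ 0 := by
      have h : ((n+2 : ℕ):ℂ) ≠ 0 := Nat.cast_ne_zero.2 (by omega)
      push_cast at h; exact h
    have hmn : m^n ≠ 0 := pow_ne_zero _ hm
    have H := alg2 (n:ℂ) m (m^n) (Nat.choose (4*n) n : ℂ)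
      (Nat.choose (4*(n+1)) (n+1) : ℂ) hm hmn z1 z2 (key n)
    push_cast [pow_succ]
    linear_combination H
end

section
/- For every nonzero complex number m and every nonnegative integer n, the sum over k from 0 to n of ((256-27m)k^3 + 384k^2 + (176+3m)k + 24) * binomial(4k, k) / ((3k+1) * m^k) equals 8(2n+1)(4n+1)(4n+3) * binomial(4n, n) / ((3n+1) * m^n). -/
theorem stmt_5 (m : ℂ) (hm : m ≠ 0) (n : ℕ) :
    ∑ k ∈ Finset.range (n+1),
      ((256-27*m)*(k:ℂ)^3 + 384*(k:ℂ)^2 + (176+3*m)*(k:ℂ) + 24) *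
        (Nat.choose (4*k) k : ℂ) / ((3*(k:ℂ)+1) * m^k) =
    8*(2*(n:ℂ)+1)*(4*(n:ℂ)+1)*(4*(n:ℂ)+3) * (Nat.choose (4*n) n : ℂ) /
      ((3*(n:ℂ)+1) * m^n) := by
  induction n with
  | zero => norm_num
  | succ n ih =>
    -- ratio identities for binomial coefficients, in ℂ
    have ncz : ∀ a : ℕ, a ≠ 0 → ((a : ℂ)) ≠ 0 := fun a ha => Nat.cast_ne_zero.mpr ha
    have e1 : ((Nat.choose (4*n+1) n : ℂ)) * (3*(n:ℂ)+1) =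
        ((Nat.choose (4*n) n : ℂ)) * (4*(n:ℂ)+1) := by
      have h := Nat.choose_mul_succ_eq (4*n) n
      rw [show 4*n+1-n = 3*n+1 from by omega] at h
      have := congrArg (Nat.cast : ℕ → ℂ) h.symm
      push_cast at this; linear_combination this
    have e2 : ((Nat.choose (4*n+2) n : ℂ)) * (3*(n:ℂ)+2) =
        ((Nat.choose (4*n+1) n : ℂ)) * (4*(n:ℂ)+2) := by
      have h := Nat.choose_mul_succ_eq (4*n+1) n
      rw [show 4*n+1+1-n = 3*n+2 from by omega,
        show 4*n+1+1 = 4*n+2 from by omega] at h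
      have := congrArg (Nat.cast : ℕ → ℂ) h.symm
      push_cast at this; linear_combination this
    have e3 : ((Nat.choose (4*n+3) n : ℂ)) * (3*(n:ℂ)+3) =
        ((Nat.choose (4*n+2) n : ℂ)) * (4*(n:ℂ)+3) := by
      have h := Nat.choose_mul_succ_eq (4*n+2) n
      rw [show 4*n+2+1-n = 3*n+3 from by omega,
        show 4*n+2+1 = 4*n+3 from by omega] at h
      have := congrArg (Nat.cast : ℕ → ℂ) h.symm
      push_cast at this; linear_combination this
    have e4 : ((Nat.choose (4*(n+1)) (n+1) : ℂ)) * ((n:ℂ)+1) =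
        (4*(n:ℂ)+4) * ((Nat.choose (4*n+3) n : ℂ)) := by
      have h := Nat.add_one_mul_choose_eq (4*n+3) n
      rw [show 4*n+3+1 = 4*(n+1) from by omega] at h
      have := congrArg (Nat.cast : ℕ → ℂ) h.symm
      push_cast at this; linear_combination this
    have hk : ((Nat.choose (4*(n+1)) (n+1) : ℂ)) *
          (((n:ℂ)+1)*(3*(n:ℂ)+1)*(3*(n:ℂ)+2)*(3*(n:ℂ)+3)) =
        ((Nat.choose (4*n) n : ℂ)) *
          ((4*(n:ℂ)+1)*(4*(n:ℂ)+2)*(4*(n:ℂ)+3)*(4*(n:ℂ)+4)) := by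
      linear_combination ((3*(n:ℂ)+1)*(3*(n:ℂ)+2)*(3*(n:ℂ)+3)) * e4 +
        ((4*(n:ℂ)+4)*(3*(n:ℂ)+1)*(3*(n:ℂ)+2)) * e3 +
        ((4*(n:ℂ)+4)*(4*(n:ℂ)+3)*(3*(n:ℂ)+1)) * e2 +
        ((4*(n:ℂ)+4)*(4*(n:ℂ)+3)*(4*(n:ℂ)+2)) * e1
    have h1 : ((n:ℂ)+1) ≠ 0 := Nat.cast_add_one_ne_zero n
    have h2 : (3*(n:ℂ)+1) ≠ 0 := by
      intro h; apply ncz (3*n+1) (by omega); push_cast; linear_combination h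
    have h3 : (3*(n:ℂ)+2) ≠ 0 := by
      intro h; apply ncz (3*n+2) (by omega); push_cast; linear_combination h
    have h4 : (3*(n:ℂ)+3) ≠ 0 := by
      intro h; apply ncz (3*n+3) (by omega); push_cast; linear_combination h
    have h5 : (3*((n:ℂ)+1)+1) ≠ 0 := by
      intro h; apply ncz (3*n+4) (by omega); push_cast; linear_combination h
    have hmn : m^n ≠ 0 := pow_ne_zero _ hm
    have hD : (((n:ℂ)+1)*(3*(n:ℂ)+1)*(3*(n:ℂ)+2)*(3*(n:ℂ)+3)) ≠ 0 :=
      mul_ne_zero (mul_ne_zero (mul_ne_zero h1 h2) h3) h4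
    have hb : ((Nat.choose (4*(n+1)) (n+1) : ℂ)) =
        ((Nat.choose (4*n) n : ℂ)) *
          ((4*(n:ℂ)+1)*(4*(n:ℂ)+2)*(4*(n:ℂ)+3)*(4*(n:ℂ)+4)) /
          (((n:ℂ)+1)*(3*(n:ℂ)+1)*(3*(n:ℂ)+2)*(3*(n:ℂ)+3)) := by
      rw [eq_div_iff hD]; exact hk
    rw [Finset.sum_range_succ, ih]
    push_cast
    have hk2 : 8*(2*(n:ℂ)+1)*(4*(n:ℂ)+1)*(4*(n:ℂ)+3) * ((Nat.choose (4*n) n : ℂ)) =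
        3*((n:ℂ)+1)*(3*(n:ℂ)+1)*(3*(n:ℂ)+2) * ((Nat.choose (4*(n+1)) (n+1) : ℂ)) := by
      apply mul_left_cancel₀ h4
      linear_combination -3 * hk
    rw [pow_succ]
    field_simp
    have h2' : (n:ℂ)*3+1 ≠ 0 := by rw [mul_comm]; exact h2
    rw [div_add' _ _ _ h2', div_eq_iff h2']
    linear_combination ((3*(n:ℂ)+4)*m^(n+1)) * hk2
end

section
/- For every nonzero complex number m and every nonnegative integer n, the sum over k from 0 to n of ((256-27m)k^3 + 3(128-9m)k^2 + 2(88-3m)k + 24) * binomial(4k, k) / ((3k+1)(3k+2) * m^k) equals 8(2n+1)(4n+1)(4n+3) * binomial(4n, n) / ((3n+1)(3n+2) * m^n). -/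
lemma key_nat (n : ℕ) :
    ((n+1)*(3*n+1)*(3*n+2)*(3*n+3)) * Nat.choose (4*n+4) (n+1) =
    ((4*n+1)*(4*n+2)*(4*n+3)*(4*n+4)) * Nat.choose (4*n) n := by
  have h1 : Nat.choose (4*n) n * (Nat.factorial n * Nat.factorial (3*n)) = Nat.factorial (4*n) := by
    have := Nat.choose_mul_factorial_mul_factorial (show n ≤ 4*n by omega)
    rw [show 4*n - n = 3*n by omega] at this
    linarith [this]
  have h2 : Nat.choose (4*n+4) (n+1) * (Nat.factorial (n+1) * Nat.factorial (3*n+3)) = Nat.factorial (4*n+4) := by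
    have := Nat.choose_mul_factorial_mul_factorial (show n+1 ≤ 4*n+4 by omega)
    rw [show 4*n+4 - (n+1) = 3*n+3 by omega] at this
    linarith [this]
  have hpos : 0 < Nat.factorial n * Nat.factorial (3*n) := by
    positivity
  apply Nat.eq_of_mul_eq_mul_right hpos
  have e1 : Nat.factorial (n+1) = (n+1) * Nat.factorial n := Nat.factorial_succ n
  have e2 : Nat.factorial (3*n+3) = (3*n+3)*(3*n+2)*(3*n+1) * Nat.factorial (3*n) := by
    rw [show 3*n+3 = (3*n+2)+1 from rfl, Nat.factorial_succ,
        show 3*n+2 = (3*n+1)+1 from rfl, Nat.factorial_succ,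
        show 3*n+1 = (3*n)+1 from rfl, Nat.factorial_succ]
    ring
  have e3 : Nat.factorial (4*n+4) = (4*n+4)*(4*n+3)*(4*n+2)*(4*n+1) * Nat.factorial (4*n) := by
    rw [show 4*n+4 = (4*n+3)+1 from rfl, Nat.factorial_succ,
        show 4*n+3 = (4*n+2)+1 from rfl, Nat.factorial_succ,
        show 4*n+2 = (4*n+1)+1 from rfl, Nat.factorial_succ,
        show 4*n+1 = (4*n)+1 from rfl, Nat.factorial_succ]
    ring
  calc ((n+1)*(3*n+1)*(3*n+2)*(3*n+3)) * Nat.choose (4*n+4) (n+1) * (Nat.factorial n * Nat.factorial (3*n))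
      = Nat.choose (4*n+4) (n+1) * (Nat.factorial (n+1) * Nat.factorial (3*n+3)) := by
        rw [e1, e2]; ring
    _ = Nat.factorial (4*n+4) := h2
    _ = (4*n+4)*(4*n+3)*(4*n+2)*(4*n+1) * Nat.factorial (4*n) := e3
    _ = (4*n+4)*(4*n+3)*(4*n+2)*(4*n+1) * (Nat.choose (4*n) n * (Nat.factorial n * Nat.factorial (3*n))) := by rw [h1]
    _ = ((4*n+1)*(4*n+2)*(4*n+3)*(4*n+4)) * Nat.choose (4*n) n * (Nat.factorial n * Nat.factorial (3*n)) := by ring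

lemma key_complex (n : ℕ) :
    ((n:ℂ)+1)*(3*(n:ℂ)+1)*(3*(n:ℂ)+2)*(3*(n:ℂ)+3) * (Nat.choose (4*n+4) (n+1) : ℂ) =
    (4*(n:ℂ)+1)*(4*(n:ℂ)+2)*(4*(n:ℂ)+3)*(4*(n:ℂ)+4) * (Nat.choose (4*n) n : ℂ) := by
  have := congrArg (Nat.cast : ℕ → ℂ) (key_nat n)
  push_cast at this
  linear_combination this

lemma key_complex2 (n : ℕ) :
    (3*(n:ℂ)+1)*(3*(n:ℂ)+2)*(3*(n:ℂ)+3) * (Nat.choose (4*n+4) (n+1) : ℂ) =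
    4*(4*(n:ℂ)+1)*(4*(n:ℂ)+2)*(4*(n:ℂ)+3) * (Nat.choose (4*n) n : ℂ) := by
  have h1 : ((n:ℂ)+1) ≠ 0 := by
    have : ((n+1 : ℕ) : ℂ) ≠ 0 := Nat.cast_ne_zero.mpr (by omega)
    push_cast at this; exact this
  apply mul_left_cancel₀ h1
  linear_combination key_complex n

theorem stmt_6 (m : ℂ) (hm : m ≠ 0) (n : ℕ) :
    ∑ k ∈ Finset.range (n+1),
      ((256-27*m)*(k:ℂ)^3 + 3*(128-9*m)*(k:ℂ)^2 + 2*(88-3*m)*(k:ℂ) + 24) *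
        (Nat.choose (4*k) k : ℂ) / ((3*(k:ℂ)+1)*(3*(k:ℂ)+2) * m^k) =
    8*(2*(n:ℂ)+1)*(4*(n:ℂ)+1)*(4*(n:ℂ)+3) * (Nat.choose (4*n) n : ℂ) /
      ((3*(n:ℂ)+1)*(3*(n:ℂ)+2) * m^n) := by
  induction n with
  | zero => norm_num
  | succ n ih =>
    rw [Finset.sum_range_succ, ih]
    have cast_ne : ∀ a : ℕ, a ≠ 0 → ((a:ℂ) ≠ 0) := fun a ha => Nat.cast_ne_zero.mpr ha
    have hA : (3*(n:ℂ)+1) ≠ 0 := fun h => cast_ne (3*n+1) (by omega) (by push_cast; linear_combination h)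
    have hB : (3*(n:ℂ)+2) ≠ 0 := fun h => cast_ne (3*n+2) (by omega) (by push_cast; linear_combination h)
    have hC : (3*(n:ℂ)+3) ≠ 0 := fun h => cast_ne (3*n+3) (by omega) (by push_cast; linear_combination h)
    have hD : ((n:ℂ)+1) ≠ 0 := fun h => cast_ne (n+1) (by omega) (by push_cast; linear_combination h)
    have hA' : (3*((n:ℂ)+1)+1) ≠ 0 := fun h => cast_ne (3*n+4) (by omega) (by push_cast; linear_combination h)
    have hB' : (3*((n:ℂ)+1)+2) ≠ 0 := fun h => cast_ne (3*n+5) (by omega) (by push_cast; linear_combination h)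
    have hmn : m^n ≠ 0 := pow_ne_zero n hm
    have hc : (Nat.choose (4*(n+1)) (n+1) : ℂ) = Nat.choose (4*n+4) (n+1) := by
      norm_num [show 4*(n+1) = 4*n+4 by ring]
    have hd1 : (3*(n:ℂ)+1)*(3*(n:ℂ)+2)*m^n ≠ 0 := mul_ne_zero (mul_ne_zero hA hB) hmn
    have hd2 : (3*((n:ℂ)+1)+1)*(3*((n:ℂ)+1)+2)*m^(n+1) ≠ 0 :=
      mul_ne_zero (mul_ne_zero hA' hB') (pow_ne_zero _ hm)
    push_cast
    rw [hc, div_add_div _ _ hd1 hd2, div_eq_div_iff (mul_ne_zero hd1 hd2) hd2]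
    linear_combination (-(m^2) * (m^n)^2 * (3*(n:ℂ)+4)^2 * (3*(n:ℂ)+5)^2) * key_complex2 n
end

section
/- If the real number m satisfies |m| > 27/256, then the infinite series with k-th term ((256m-27)k^3 - 3(128m-9)k^2 + 2(88m-3)k - 24m) / (k(3k-1)(3k-2) * m^k * binomial(4k, k)), summed over k ≥ 1, converges to 3. -/
open Filter Finset

lemma chooseRec (n : ℕ) :
    (n+1)*(3*n+1)*(3*n+2)*(3*n+3) * Nat.choose (4*(n+1)) (n+1)
      = (4*n+1)*(4*n+2)*(4*n+3)*(4*n+4) * Nat.choose (4*n) n := by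
  have h1 := Nat.choose_mul_factorial_mul_factorial (show n ≤ 4*n by omega)
  have h2 := Nat.choose_mul_factorial_mul_factorial (show n+1 ≤ 4*(n+1) by omega)
  have e3 : 4*n - n = 3*n := by omega
  have e4 : 4*(n+1) - (n+1) = 3*n+3 := by omega
  rw [e3] at h1
  rw [e4] at h2
  have hpos : 0 < n.factorial * (3*n).factorial :=
    Nat.mul_pos (Nat.factorial_pos _) (Nat.factorial_pos _)
  apply Nat.eq_of_mul_eq_mul_right hpos
  have f1 : (n+1).factorial = (n+1) * n.factorial := Nat.factorial_succ n
  have f2 : (3*n+3).factorial = (3*n+3)*((3*n+2)*((3*n+1)*(3*n).factorial)) := by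
    rw [show 3*n+3 = (3*n+2)+1 by ring, Nat.factorial_succ,
        show 3*n+2 = (3*n+1)+1 by ring, Nat.factorial_succ,
        show 3*n+1 = (3*n)+1 by ring, Nat.factorial_succ]
  have f3 : (4*(n+1)).factorial = (4*n+4)*((4*n+3)*((4*n+2)*((4*n+1)*(4*n).factorial))) := by
    rw [show 4*(n+1) = (4*n+3)+1 by ring, Nat.factorial_succ,
        show 4*n+3 = (4*n+2)+1 by ring, Nat.factorial_succ,
        show 4*n+2 = (4*n+1)+1 by ring, Nat.factorial_succ,
        show 4*n+1 = (4*n)+1 by ring, Nat.factorial_succ]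
  calc (n+1)*(3*n+1)*(3*n+2)*(3*n+3) * Nat.choose (4*(n+1)) (n+1) * (n.factorial * (3*n).factorial)
      = Nat.choose (4*(n+1)) (n+1) * (n+1).factorial * (3*n+3).factorial := by
        rw [f1, f2]; ring
    _ = (4*(n+1)).factorial := h2
    _ = (4*n+1)*(4*n+2)*(4*n+3)*(4*n+4) * ((4*n).factorial) := by rw [f3]; ring
    _ = (4*n+1)*(4*n+2)*(4*n+3)*(4*n+4) * (Nat.choose (4*n) n * n.factorial * (3*n).factorial) := by
        rw [h1]
    _ = (4*n+1)*(4*n+2)*(4*n+3)*(4*n+4) * Nat.choose (4*n) n * (n.factorial * (3*n).factorial) := by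
        ring

theorem stmt_9 (m : ℝ) (hm : |m| > 27/256) :
    HasSum (fun n : ℕ =>
      ((256*m-27)*((n:ℝ)+1)^3 - 3*(128*m-9)*((n:ℝ)+1)^2 + 2*(88*m-3)*((n:ℝ)+1) - 24*m) /
        (((n:ℝ)+1)*(3*((n:ℝ)+1)-1)*(3*((n:ℝ)+1)-2) * m^(n+1) * (Nat.choose (4*(n+1)) (n+1) : ℝ)))
      3 := by
  have hm0 : m ≠ 0 := by
    intro h; rw [h] at hm; simp at hm; norm_num at hm
  have hmabs : (0:ℝ) < |m| := abs_pos.mpr hm0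
  set c : ℕ → ℝ := fun n => (Nat.choose (4*n) n : ℝ) with hcdef
  have hcpos : ∀ n, 0 < c n := by
    intro n
    have : 0 < Nat.choose (4*n) n := Nat.choose_pos (by omega)
    simp only [hcdef]
    exact_mod_cast this
  have hkey : ∀ n : ℕ, ((n:ℝ)+1)*(3*n+1)*(3*n+2)*(3*n+3) * c (n+1)
      = (4*n+1)*(4*n+2)*(4*n+3)*(4*n+4) * c n := by
    intro n
    have := chooseRec n
    have : ((((n+1)*(3*n+1)*(3*n+2)*(3*n+3) * Nat.choose (4*(n+1)) (n+1) : ℕ)) : ℝ)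
        = (((4*n+1)*(4*n+2)*(4*n+3)*(4*n+4) * Nat.choose (4*n) n : ℕ) : ℝ) := by
      exact_mod_cast this
    push_cast at this
    simp only [hcdef]
    linarith [this]
  set g : ℕ → ℝ := fun n => 3 / (m^n * c n) with hgdef
  -- summability of g via ratio test
  have hsum : Summable g := by
    apply summable_of_ratio_test_tendsto_lt_one (l := 27/(256*|m|))
    · rw [div_lt_one (by positivity)]
      nlinarith [hm]
    · filter_upwards with n
      simp only [hgdef]
      have := hcpos n
      positivity
    · have hratio : ∀ n : ℕ, ‖g (n+1)‖ / ‖g n‖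
          = (((n:ℝ)+1)*(3*n+1)*(3*n+2)*(3*n+3)) / ((4*n+1)*(4*n+2)*(4*n+3)*(4*n+4)) / |m| := by
        intro n
        have hc1 := hcpos n
        have hc2 := hcpos (n+1)
        have hk := hkey n
        have h1 : ‖g (n+1)‖ = 3 / (|m|^(n+1) * c (n+1)) := by
          simp only [hgdef, Real.norm_eq_abs, abs_div, abs_mul, abs_pow,
            abs_of_pos hc2]
          norm_num
        have h2 : ‖g n‖ = 3 / (|m|^n * c n) := by
          simp only [hgdef, Real.norm_eq_abs, abs_div, abs_mul, abs_pow,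
            abs_of_pos hc1]
          norm_num
        rw [h1, h2]
        have hD : ((n:ℝ)+1)*(3*n+1)*(3*n+2)*(3*n+3) > 0 := by positivity
        have hP : ((4*(n:ℝ))+1)*(4*n+2)*(4*n+3)*(4*n+4) > 0 := by positivity
        field_simp
        have hn1 : ((n:ℝ)+1) ≠ 0 := by positivity
        apply mul_right_cancel₀ hn1
        linear_combination (-|m|^(n+1)) * hk
      have h0 : Tendsto (fun n : ℕ => ((n:ℝ))⁻¹) atTop (nhds 0) :=
        tendsto_inv_atTop_zero.comp tendsto_natCast_atTop_atTop
      have h1 : Tendsto (fun n : ℕ => 1+((n:ℝ))⁻¹) atTop (nhds 1) := by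
        simpa using tendsto_const_nhds.add h0
      have h2 : Tendsto (fun n : ℕ => 3+((n:ℝ))⁻¹) atTop (nhds 3) := by
        simpa using tendsto_const_nhds.add h0
      have h3 : Tendsto (fun n : ℕ => 3+2*((n:ℝ))⁻¹) atTop (nhds 3) := by
        simpa using tendsto_const_nhds.add (h0.const_mul 2)
      have h4 : Tendsto (fun n : ℕ => 3+3*((n:ℝ))⁻¹) atTop (nhds 3) := by
        simpa using tendsto_const_nhds.add (h0.const_mul 3)
      have h5 : Tendsto (fun n : ℕ => 4+((n:ℝ))⁻¹) atTop (nhds 4) := by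
        simpa using tendsto_const_nhds.add h0
      have h6 : Tendsto (fun n : ℕ => 4+2*((n:ℝ))⁻¹) atTop (nhds 4) := by
        simpa using tendsto_const_nhds.add (h0.const_mul 2)
      have h7 : Tendsto (fun n : ℕ => 4+3*((n:ℝ))⁻¹) atTop (nhds 4) := by
        simpa using tendsto_const_nhds.add (h0.const_mul 3)
      have h8 : Tendsto (fun n : ℕ => 4+4*((n:ℝ))⁻¹) atTop (nhds 4) := by
        simpa using tendsto_const_nhds.add (h0.const_mul 4)
      have hnum : Tendsto (fun n : ℕ =>
          (1+((n:ℝ))⁻¹)*(3+((n:ℝ))⁻¹)*(3+2*((n:ℝ))⁻¹)*(3+3*((n:ℝ))⁻¹)) atTop (nhds 27) := by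
        have := ((h1.mul h2).mul h3).mul h4
        norm_num at this
        exact this
      have hden : Tendsto (fun n : ℕ =>
          (4+((n:ℝ))⁻¹)*(4+2*((n:ℝ))⁻¹)*(4+3*((n:ℝ))⁻¹)*(4+4*((n:ℝ))⁻¹)) atTop (nhds 256) := by
        have := ((h5.mul h6).mul h7).mul h8
        norm_num at this
        exact this
      have hq := hnum.div hden (by norm_num)
      have hDP : Tendsto (fun n : ℕ =>
          (((n:ℝ)+1)*(3*n+1)*(3*n+2)*(3*n+3)) / ((4*(n:ℝ)+1)*(4*n+2)*(4*n+3)*(4*n+4)) / |m|)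
          atTop (nhds (27/256/|m|)) := by
        refine Tendsto.div_const ?_ |m|
        refine Tendsto.congr' ?_ hq
        filter_upwards [eventually_ge_atTop 1] with n hn
        have hn0 : (n:ℝ) ≠ 0 := by
          have : (1:ℝ) ≤ n := by exact_mod_cast hn
          linarith
        rw [Pi.div_apply]
        field_simp
      have hval : 27/256/|m| = 27/(256*|m|) := by ring
      rw [hval] at hDP
      refine hDP.congr ?_
      intro n
      exact (hratio n).symm
  -- telescoping
  have hg0 : Tendsto g atTop (nhds 0) := hsum.tendsto_atTop_zero
  have hterm : ∀ n : ℕ,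
      ((256*m-27)*((n:ℝ)+1)^3 - 3*(128*m-9)*((n:ℝ)+1)^2 + 2*(88*m-3)*((n:ℝ)+1) - 24*m) /
        (((n:ℝ)+1)*(3*((n:ℝ)+1)-1)*(3*((n:ℝ)+1)-2) * m^(n+1) * (Nat.choose (4*(n+1)) (n+1) : ℝ))
      = g n - g (n+1) := by
    intro n
    have hc1 := hcpos n
    have hc2 := hcpos (n+1)
    have hk := hkey n
    have hcc : ((Nat.choose (4*(n+1)) (n+1) : ℕ) : ℝ) = c (n+1) := rfl
    have hdne : ((n:ℝ)+1)*(3*(n:ℝ)+1)*(3*(n:ℝ)+2)*(3*(n:ℝ)+3) ≠ 0 := by positivity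
    have hB : c (n+1) = ((4*(n:ℝ)+1)*(4*(n:ℝ)+2)*(4*(n:ℝ)+3)*(4*(n:ℝ)+4) * c n) /
        (((n:ℝ)+1)*(3*(n:ℝ)+1)*(3*(n:ℝ)+2)*(3*(n:ℝ)+3)) := by
      rw [eq_div_iff hdne]
      linarith [hk]
    simp only [hgdef]
    rw [hcc, hB]
    have hmn : m^n ≠ 0 := pow_ne_zero _ hm0
    have hc1' : c n ≠ 0 := ne_of_gt hc1
    have hn1 : ((n:ℝ)+1) ≠ 0 := by positivity
    have hn2 : (3*((n:ℝ)+1)-1) ≠ 0 := by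
      intro h; have := Nat.cast_nonneg (α := ℝ) n; linarith
    have hn3 : (3*((n:ℝ)+1)-2) ≠ 0 := by
      intro h; have := Nat.cast_nonneg (α := ℝ) n; linarith
    field_simp
    rw [div_eq_iff (by rw [show ((n:ℝ)+1)*3-1 = 3*n+2 by ring, show ((n:ℝ)+1)*3-2 = 3*n+1 by ring]; positivity)]
    ring
  have hfun : (fun n : ℕ =>
      ((256*m-27)*((n:ℝ)+1)^3 - 3*(128*m-9)*((n:ℝ)+1)^2 + 2*(88*m-3)*((n:ℝ)+1) - 24*m) /
        (((n:ℝ)+1)*(3*((n:ℝ)+1)-1)*(3*((n:ℝ)+1)-2) * m^(n+1) * (Nat.choose (4*(n+1)) (n+1) : ℝ)))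
      = fun n => g n - g (n+1) := funext hterm
  rw [hfun]
  have hS : Summable (fun n => g n - g (n+1)) := hsum.sub ((summable_nat_add_iff 1).mpr hsum)
  have hps : Tendsto (fun N => ∑ i ∈ range N, (g i - g (i+1))) atTop (nhds 3) := by
    have hrs : ∀ N, ∑ i ∈ range N, (g i - g (i+1)) = g 0 - g N :=
      fun N => Finset.sum_range_sub' g N
    simp only [hrs]
    have hg00 : g 0 = 3 := by
      simp [hgdef, hcdef]
    rw [show (3:ℝ) = g 0 - 0 by rw [hg00]; ring]
    exact tendsto_const_nhds.sub hg0
  have hts := hS.hasSum.tendsto_sum_nat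
  have heq : ∑' n, (g n - g (n+1)) = 3 := tendsto_nhds_unique hts hps
  rw [← heq]
  exact hS.hasSum
end

section
/- If the real number m satisfies |m| > 27/256, then the infinite series with k-th term ((256m-27)k^3 - 3(128m+9)k^2 + 2(88m-3)k - 24m) / (k * m^k * binomial(4k, k)), summed over k ≥ 1, converges to 6. -/
open Filter Topology

lemma choose_rec_aux (k : ℕ) :
    (k+1)*(3*k+1)*(3*k+2)*(3*k+3) * Nat.choose (4*k+4) (k+1)
      = (4*k+1)*(4*k+2)*(4*k+3)*(4*k+4) * Nat.choose (4*k) k := by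
  have h1 := Nat.choose_mul_factorial_mul_factorial (show k ≤ 4*k by omega)
  have h2 := Nat.choose_mul_factorial_mul_factorial (show k+1 ≤ 4*k+4 by omega)
  have e1 : 4*k - k = 3*k := by omega
  have e2 : 4*k+4 - (k+1) = 3*k+3 := by omega
  rw [e1] at h1; rw [e2] at h2
  have f1 : Nat.factorial (k+1) = (k+1) * Nat.factorial k := Nat.factorial_succ k
  have f2 : Nat.factorial (3*k+3) = (3*k+3)*((3*k+2)*((3*k+1)* Nat.factorial (3*k))) := by
    rw [show 3*k+3 = (3*k+2)+1 by ring, Nat.factorial_succ,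
        show 3*k+2 = (3*k+1)+1 by ring, Nat.factorial_succ,
        show 3*k+1 = (3*k)+1 by ring, Nat.factorial_succ]
  have f3 : Nat.factorial (4*k+4) = (4*k+4)*((4*k+3)*((4*k+2)*((4*k+1)* Nat.factorial (4*k)))) := by
    rw [show 4*k+4 = (4*k+3)+1 by ring, Nat.factorial_succ,
        show 4*k+3 = (4*k+2)+1 by ring, Nat.factorial_succ,
        show 4*k+2 = (4*k+1)+1 by ring, Nat.factorial_succ,
        show 4*k+1 = (4*k)+1 by ring, Nat.factorial_succ]
  apply Nat.eq_of_mul_eq_mul_right (Nat.mul_pos (Nat.factorial_pos k) (Nat.factorial_pos (3*k)))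
  calc (k+1)*(3*k+1)*(3*k+2)*(3*k+3) * Nat.choose (4*k+4) (k+1) * (Nat.factorial k * Nat.factorial (3*k))
      = Nat.choose (4*k+4) (k+1) * ((k+1)*Nat.factorial k) * ((3*k+3)*((3*k+2)*((3*k+1)* Nat.factorial (3*k)))) := by ring
    _ = Nat.choose (4*k+4) (k+1) * Nat.factorial (k+1) * Nat.factorial (3*k+3) := by rw [← f1, ← f2]
    _ = Nat.factorial (4*k+4) := h2
    _ = (4*k+4)*((4*k+3)*((4*k+2)*((4*k+1)* Nat.factorial (4*k)))) := f3
    _ = (4*k+4)*((4*k+3)*((4*k+2)*((4*k+1)* (Nat.choose (4*k) k * Nat.factorial k * Nat.factorial (3*k))))) := by rw [h1]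
    _ = (4*k+1)*(4*k+2)*(4*k+3)*(4*k+4) * Nat.choose (4*k) k * (Nat.factorial k * Nat.factorial (3*k)) := by ring

lemma choose_recR_aux (k : ℕ) :
    ((k:ℝ)+1)*(3*k+1)*(3*k+2)*(3*k+3) * (Nat.choose (4*k+4) (k+1) : ℝ)
      = ((4:ℝ)*k+1)*(4*k+2)*(4*k+3)*(4*k+4) * (Nat.choose (4*k) k : ℝ) := by
  exact_mod_cast choose_rec_aux k

noncomputable def gAux (m : ℝ) : ℕ → ℝ := fun n : ℕ =>
  4*m*(4*(n:ℝ)+1)*(4*(n:ℝ)+2)*(4*(n:ℝ)+3) /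
    (((n:ℝ)+1) * m^(n+1) * (Nat.choose (4*n+4) (n+1) : ℝ))

lemma telescope_aux (m : ℝ) (hm0 : m ≠ 0) (n : ℕ) :
      ((256*m-27)*((n:ℝ)+1)^3 - 3*(128*m+9)*((n:ℝ)+1)^2 + 2*(88*m-3)*((n:ℝ)+1) - 24*m) /
        (((n:ℝ)+1) * m^(n+1) * (Nat.choose (4*(n+1)) (n+1) : ℝ)) =
      gAux m n - gAux m (n+1) := by
  unfold gAux
  rw [show 4*(n+1) = 4*n+4 by ring, show 4*n+4+4 = 4*n+8 by ring, show n+1+1 = n+2 from rfl]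
  push_cast
  have key := choose_recR_aux (n+1)
  rw [show 4*(n+1)+4 = 4*n+8 by ring, show n+1+1 = n+2 from rfl,
      show 4*(n+1) = 4*n+4 by ring] at key
  push_cast at key
  set a : ℝ := (Nat.choose (4*n+4) (n+1) : ℝ) with ha
  set b : ℝ := (Nat.choose (4*n+8) (n+2) : ℝ) with hb0
  have hane : a ≠ 0 := by
    have : (0:ℝ) < a := by rw [ha]; exact_mod_cast Nat.choose_pos (by omega)
    linarith
  have hbne : b ≠ 0 := by
    have : (0:ℝ) < b := by rw [hb0]; exact_mod_cast Nat.choose_pos (by omega)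
    linarith
  have hn1 : ((n:ℝ)+1) ≠ 0 := by positivity
  have hn2 : ((n:ℝ)+2) ≠ 0 := by positivity
  have hdnz : ((n:ℝ)+2)*(3*(n:ℝ)+4)*(3*(n:ℝ)+5)*(3*(n:ℝ)+6) ≠ 0 := by positivity
  have hb : b = (4*(n:ℝ)+5)*(4*(n:ℝ)+6)*(4*(n:ℝ)+7)*(4*(n:ℝ)+8) * a /
      (((n:ℝ)+2)*(3*(n:ℝ)+4)*(3*(n:ℝ)+5)*(3*(n:ℝ)+6)) := by
    rw [eq_div_iff hdnz]; linear_combination key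
  rw [hb]
  field_simp
  ring

lemma gratio_aux (m : ℝ) (hm0 : m ≠ 0) (n : ℕ) :
    gAux m (n+1) / gAux m n =
      (((n:ℝ)+1)*(3*(n:ℝ)+4)*(3*(n:ℝ)+5)*(3*(n:ℝ)+6)) /
        ((4*(n:ℝ)+1)*(4*(n:ℝ)+2)*(4*(n:ℝ)+3)*(4*(n:ℝ)+8)) * (1/m) := by
  unfold gAux
  rw [show 4*(n+1)+4 = 4*n+8 by ring, show n+1+1 = n+2 from rfl]
  push_cast
  have key := choose_recR_aux (n+1)
  rw [show 4*(n+1)+4 = 4*n+8 by ring, show n+1+1 = n+2 from rfl,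
      show 4*(n+1) = 4*n+4 by ring] at key
  push_cast at key
  set a : ℝ := (Nat.choose (4*n+4) (n+1) : ℝ) with ha
  set b : ℝ := (Nat.choose (4*n+8) (n+2) : ℝ) with hb0
  have hane : a ≠ 0 := by
    have : (0:ℝ) < a := by rw [ha]; exact_mod_cast Nat.choose_pos (by omega)
    linarith
  have hbne : b ≠ 0 := by
    have : (0:ℝ) < b := by rw [hb0]; exact_mod_cast Nat.choose_pos (by omega)
    linarith
  have hn1 : ((n:ℝ)+1) ≠ 0 := by positivity
  have hn2 : ((n:ℝ)+2) ≠ 0 := by positivity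
  have hdnz : ((n:ℝ)+2)*(3*(n:ℝ)+4)*(3*(n:ℝ)+5)*(3*(n:ℝ)+6) ≠ 0 := by positivity
  have hb : b = (4*(n:ℝ)+5)*(4*(n:ℝ)+6)*(4*(n:ℝ)+7)*(4*(n:ℝ)+8) * a /
      (((n:ℝ)+2)*(3*(n:ℝ)+4)*(3*(n:ℝ)+5)*(3*(n:ℝ)+6)) := by
    rw [eq_div_iff hdnz]; linear_combination key
  have p1 : (4*(n:ℝ)+1) ≠ 0 := by positivity
  have p2 : (4*(n:ℝ)+2) ≠ 0 := by positivity
  have p3 : (4*(n:ℝ)+3) ≠ 0 := by positivity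
  have p5 : (4*(n:ℝ)+5) ≠ 0 := by positivity
  have p6 : (4*(n:ℝ)+6) ≠ 0 := by positivity
  have p7 : (4*(n:ℝ)+7) ≠ 0 := by positivity
  have p8 : (4*(n:ℝ)+8) ≠ 0 := by positivity
  rw [hb]
  field_simp
  ring

lemma ratio_tendsto_aux : Tendsto (fun n : ℕ =>
      (((n:ℝ)+1)*(3*(n:ℝ)+4)*(3*(n:ℝ)+5)*(3*(n:ℝ)+6)) /
        ((4*(n:ℝ)+1)*(4*(n:ℝ)+2)*(4*(n:ℝ)+3)*(4*(n:ℝ)+8))) atTop (𝓝 (27/256)) := by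
  have htend0 : Tendsto (fun n : ℕ => 1/((n:ℝ)+1)) atTop (𝓝 0) :=
    tendsto_one_div_add_atTop_nhds_zero_nat
  set F : ℝ → ℝ := fun u => (3+u)*(3+2*u)*(3+3*u)/((4-3*u)*(4-2*u)*(4-u)*(4+4*u)) with hF
  have hFc : ContinuousAt F 0 := by
    apply ContinuousAt.div
    · fun_prop
    · fun_prop
    · norm_num
  have hF0 : F 0 = 27/256 := by norm_num [hF]
  have h1 : Tendsto (fun n : ℕ => F (1/((n:ℝ)+1))) atTop (𝓝 (27/256)) := by
    rw [← hF0]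
    exact hFc.tendsto.comp htend0
  refine h1.congr fun n => ?_
  have hn1 : ((n:ℝ)+1) ≠ 0 := by positivity
  have hu0 : (0:ℝ) < 1/((n:ℝ)+1) := by positivity
  have hu1 : 1/((n:ℝ)+1) ≤ 1 := by
    rw [div_le_one (by positivity)]
    have := Nat.cast_nonneg (α := ℝ) n; linarith
  have d1 : (4:ℝ)-3*(1/((n:ℝ)+1)) ≠ 0 := by intro h; nlinarith
  have d2 : (4:ℝ)-2*(1/((n:ℝ)+1)) ≠ 0 := by intro h; nlinarith
  have d3 : (4:ℝ)-(1/((n:ℝ)+1)) ≠ 0 := by intro h; nlinarith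
  have d4 : (4:ℝ)+4*(1/((n:ℝ)+1)) ≠ 0 := by positivity
  have hBne : ((4*(n:ℝ)+1)*(4*(n:ℝ)+2)*(4*(n:ℝ)+3)*(4*(n:ℝ)+8)) ≠ 0 := by positivity
  have hnum : ((3:ℝ)+1/((n:ℝ)+1))*(3+2*(1/((n:ℝ)+1)))*(3+3*(1/((n:ℝ)+1)))
      = ((3*(n:ℝ)+4)*(3*(n:ℝ)+5)*(3*(n:ℝ)+6))/((n:ℝ)+1)^3 := by
    field_simp; ring
  have hdenv : ((4:ℝ)-3*(1/((n:ℝ)+1)))*(4-2*(1/((n:ℝ)+1)))*(4-1/((n:ℝ)+1))*(4+4*(1/((n:ℝ)+1)))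
      = ((4*(n:ℝ)+1)*(4*(n:ℝ)+2)*(4*(n:ℝ)+3)*(4*(n:ℝ)+8))/((n:ℝ)+1)^4 := by
    field_simp; ring
  rw [hF]
  show ((3:ℝ)+1/((n:ℝ)+1))*(3+2*(1/((n:ℝ)+1)))*(3+3*(1/((n:ℝ)+1))) /
      (((4:ℝ)-3*(1/((n:ℝ)+1)))*(4-2*(1/((n:ℝ)+1)))*(4-1/((n:ℝ)+1))*(4+4*(1/((n:ℝ)+1)))) = _
  rw [hnum, hdenv, div_div_div_comm]
  rw [div_eq_div_iff (by positivity) (by positivity)]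
  field_simp

theorem stmt_10 (m : ℝ) (hm : |m| > 27/256) :
    HasSum (fun n : ℕ =>
      ((256*m-27)*((n:ℝ)+1)^3 - 3*(128*m+9)*((n:ℝ)+1)^2 + 2*(88*m-3)*((n:ℝ)+1) - 24*m) /
        (((n:ℝ)+1) * m^(n+1) * (Nat.choose (4*(n+1)) (n+1) : ℝ)))
      6 := by
  have hm0 : m ≠ 0 := by
    intro h; rw [h] at hm; simp at hm; linarith
  have habs : (0:ℝ) < |m| := lt_trans (by norm_num) hm
  set g : ℕ → ℝ := gAux m with hg
  have hchpos : ∀ n : ℕ, (0:ℝ) < (Nat.choose (4*n+4) (n+1) : ℝ) := fun n => by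
    exact_mod_cast Nat.choose_pos (by omega)
  have hden : ∀ n : ℕ, ((n:ℝ)+1) * m^(n+1) * (Nat.choose (4*n+4) (n+1) : ℝ) ≠ 0 := fun n => by
    apply mul_ne_zero (mul_ne_zero _ (pow_ne_zero _ hm0)) (ne_of_gt (hchpos n))
    positivity
  have hgne : ∀ n : ℕ, g n ≠ 0 := fun n => by
    rw [hg]
    unfold gAux
    apply div_ne_zero _ (hden n)
    have h1 : (0:ℝ) < 4*(n:ℝ)+1 := by positivity
    have h2 : (0:ℝ) < 4*(n:ℝ)+2 := by positivity
    have h3 : (0:ℝ) < 4*(n:ℝ)+3 := by positivity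
    intro h
    rcases mul_eq_zero.1 h with h | h
    · rcases mul_eq_zero.1 h with h | h
      · rcases mul_eq_zero.1 h with h | h
        · simp at h; exact hm0 h
        · linarith
      · linarith
    · linarith
  have hgr : ∀ n : ℕ, g (n+1) / g n =
      (((n:ℝ)+1)*(3*(n:ℝ)+4)*(3*(n:ℝ)+5)*(3*(n:ℝ)+6)) /
        ((4*(n:ℝ)+1)*(4*(n:ℝ)+2)*(4*(n:ℝ)+3)*(4*(n:ℝ)+8)) * (1/m) :=
    fun n => gratio_aux m hm0 n
  have hrt := ratio_tendsto_aux
  have hnormrt : Tendsto (fun n : ℕ => ‖g (n+1)‖ / ‖g n‖) atTop (𝓝 (27/256 * (1/|m|))) := by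
    have h1 : ∀ n : ℕ, ‖g (n+1)‖ / ‖g n‖ =
        (((n:ℝ)+1)*(3*(n:ℝ)+4)*(3*(n:ℝ)+5)*(3*(n:ℝ)+6)) /
          ((4*(n:ℝ)+1)*(4*(n:ℝ)+2)*(4*(n:ℝ)+3)*(4*(n:ℝ)+8)) * (1/|m|) := by
      intro n
      have hpos : (0:ℝ) < (((n:ℝ)+1)*(3*(n:ℝ)+4)*(3*(n:ℝ)+5)*(3*(n:ℝ)+6)) /
          ((4*(n:ℝ)+1)*(4*(n:ℝ)+2)*(4*(n:ℝ)+3)*(4*(n:ℝ)+8)) := by positivity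
      rw [show ‖g (n+1)‖ / ‖g n‖ = |g (n+1) / g n| by rw [abs_div]; rfl,
          hgr n, abs_mul, abs_of_pos hpos, abs_div, abs_one]
    exact Tendsto.congr (fun n => (h1 n).symm) (hrt.mul_const _)
  have hl1 : 27/256 * (1/|m|) < 1 := by
    rw [mul_one_div, div_lt_one habs]; exact hm
  have hsumg : Summable g :=
    summable_of_ratio_test_tendsto_lt_one hl1 (Eventually.of_forall hgne) hnormrt
  obtain ⟨S, hS⟩ := hsumg
  have hS1 : HasSum (fun n => g (n+1)) (S - ∑ i ∈ Finset.range 1, g i) :=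
    (hasSum_nat_add_iff' 1).2 hS
  have hsub := hS.sub hS1
  have hg0 : g 0 = 6 := by
    rw [hg]
    unfold gAux
    norm_num
    field_simp
    ring
  have hval : S - (S - ∑ i ∈ Finset.range 1, g i) = 6 := by
    simp [hg0]
  rw [hval] at hsub
  have heq : (fun n : ℕ =>
      ((256*m-27)*((n:ℝ)+1)^3 - 3*(128*m+9)*((n:ℝ)+1)^2 + 2*(88*m-3)*((n:ℝ)+1) - 24*m) /
        (((n:ℝ)+1) * m^(n+1) * (Nat.choose (4*(n+1)) (n+1) : ℝ))) = fun n => g n - g (n+1) := by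
    funext n
    rw [hg]
    exact telescope_aux m hm0 n
  rw [heq]
  exact hsub
end

section
/- The infinite series sum over k ≥ 1 of (5k^2 - 4k + 1) * 8^k / (k(3k-1)(3k-2) * binomial(4k, k)) converges to 3π/2. -/
open intervalIntegral Real MeasureTheory

lemma betaNat (n m : ℕ) : ∫ x in (0:ℝ)..1, x ^ m * (1 - x) ^ n
    = (m.factorial * n.factorial : ℝ) / (m + n + 1).factorial := by
  induction n generalizing m with
  | zero =>
      simp only [pow_zero, mul_one, integral_pow]
      push_cast [Nat.factorial_succ]
      field_simp
      simp
  | succ n ih =>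
      have key : ∫ x in (0:ℝ)..1, ((m+1) * (x ^ m * (1-x)^(n+1)) - (n+1) * (x^(m+1) * (1-x)^n))
          = 0 := by
        have hd : ∀ x ∈ Set.uIcc (0:ℝ) 1, HasDerivAt (fun x : ℝ => x^(m+1) * (1-x)^(n+1))
            ((m+1) * (x ^ m * (1-x)^(n+1)) - (n+1) * (x^(m+1) * (1-x)^n)) x := by
          intro x _
          have h1 : HasDerivAt (fun x : ℝ => x^(m+1)) ((m+1) * x^m) x := by
            simpa using hasDerivAt_pow (m+1) x
          have h2 : HasDerivAt (fun x : ℝ => (1-x)^(n+1)) (-((n+1) * (1-x)^n)) x := by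
            have hb : HasDerivAt (fun x : ℝ => 1 - x) (-1) x := by
              simpa using (hasDerivAt_id x).const_sub 1
            have := (hasDerivAt_pow (n+1) (1-x)).comp x hb
            simpa [Function.comp_def] using this.neg.neg
          have := h1.mul h2
          refine this.congr_deriv ?_
          push_cast
          ring
        have hint : IntervalIntegrable (fun x : ℝ =>
            ((m+1) * (x ^ m * (1-x)^(n+1)) - (n+1) * (x^(m+1) * (1-x)^n))) MeasureTheory.volume 0 1 := by
          apply Continuous.intervalIntegrable
          continuity
        rw [integral_eq_sub_of_hasDerivAt hd hint]
        simp
      have hi1 : IntervalIntegrable (fun x : ℝ => x ^ m * (1-x)^(n+1)) MeasureTheory.volume 0 1 := by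
        apply Continuous.intervalIntegrable; continuity
      have hi2 : IntervalIntegrable (fun x : ℝ => x ^ (m+1) * (1-x)^n) MeasureTheory.volume 0 1 := by
        apply Continuous.intervalIntegrable; continuity
      rw [integral_sub (hi1.const_mul _) (hi2.const_mul _), intervalIntegral.integral_const_mul,
        intervalIntegral.integral_const_mul, ih (m+1)] at key
      have hm : ((m:ℝ)+1) ≠ 0 := by positivity
      have h3 : (∫ x in (0:ℝ)..1, x ^ m * (1-x)^(n+1))
          = ((n:ℝ)+1) / ((m:ℝ)+1) * ((m+1).factorial * n.factorial / ((m+1) + n + 1).factorial) := by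
        field_simp at key ⊢
        linarith [key]
      rw [h3]
      have e1 : ((m+1)+n+1) = (m + (n+1) + 1) := by omega
      rw [e1]
      rw [Nat.factorial_succ m, Nat.factorial_succ n]
      push_cast
      have hf : ((m + (n+1) + 1).factorial : ℝ) ≠ 0 := by positivity
      field_simp
lemma term_eq (n : ℕ) :
    (5*((n:ℝ)+1)^2 - 4*((n:ℝ)+1) + 1) * 8^(n+1) /
        (((n:ℝ)+1)*(3*((n:ℝ)+1)-1)*(3*((n:ℝ)+1)-2) * (Nat.choose (4*(n+1)) (n+1) : ℝ))
    = ∫ t in (0:ℝ)..1, 8^(n+1) * (t^3*(1-t))^n * (3/8 - 3/4*t + 3/4*t^2) := by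
  have hsplit : ∀ t : ℝ, 8^(n+1) * (t^3*(1-t))^n * (3/8 - 3/4*t + 3/4*t^2)
      = 8^(n+1) * ((3/8) * (t^(3*n) * (1-t)^n) - (3/4) * (t^(3*n+1) * (1-t)^n)
        + (3/4) * (t^(3*n+2) * (1-t)^n)) := by
    intro t
    rw [mul_pow, ← pow_mul]
    ring
  simp only [hsplit]
  have hi0 : IntervalIntegrable (fun t : ℝ => t^(3*n) * (1-t)^n)
      MeasureTheory.volume 0 1 := by
    apply Continuous.intervalIntegrable; continuity
  have hi1 : IntervalIntegrable (fun t : ℝ => t^(3*n+1) * (1-t)^n)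
      MeasureTheory.volume 0 1 := by
    apply Continuous.intervalIntegrable; continuity
  have hi2 : IntervalIntegrable (fun t : ℝ => t^(3*n+2) * (1-t)^n)
      MeasureTheory.volume 0 1 := by
    apply Continuous.intervalIntegrable; continuity
  rw [intervalIntegral.integral_const_mul, integral_add ((hi0.const_mul _).sub (hi1.const_mul _))
      (hi2.const_mul _), integral_sub (hi0.const_mul _) (hi1.const_mul _),
    intervalIntegral.integral_const_mul, intervalIntegral.integral_const_mul, intervalIntegral.integral_const_mul]
  have b0 := betaNat n (3*n)
  have b1 := betaNat n (3*n+1)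
  have b2 := betaNat n (3*n+2)
  rw [b0, b1, b2]
  -- now pure algebra with factorials
  have hnn : (0:ℝ) ≤ (n:ℝ) := Nat.cast_nonneg n
  have hch : (Nat.choose (4*(n+1)) (n+1) : ℝ) * (n+1).factorial * (3*(n+1)).factorial
      = ((4*(n+1)).factorial : ℝ) := by
    rw [← Nat.cast_mul, ← Nat.cast_mul, show 3*(n+1) = 4*(n+1)-(n+1) from by omega,
      Nat.choose_mul_factorial_mul_factorial (by omega : n+1 ≤ 4*(n+1))]
  have F1 : ((3*n+1).factorial : ℝ) = (3*(n:ℝ)+1) * ((3*n).factorial : ℝ) := by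
    push_cast [Nat.factorial_succ]; ring
  have F2 : ((3*n+2).factorial : ℝ) = (3*(n:ℝ)+2)*((3*(n:ℝ)+1) * ((3*n).factorial : ℝ)) := by
    rw [show 3*n+2 = (3*n+1)+1 from rfl]
    push_cast [Nat.factorial_succ]; ring
  have F3 : ((3*(n+1)).factorial : ℝ)
      = (3*(n:ℝ)+3)*((3*(n:ℝ)+2)*((3*(n:ℝ)+1) * ((3*n).factorial : ℝ))) := by
    rw [show 3*(n+1) = ((3*n+1)+1)+1 from by omega]
    push_cast [Nat.factorial_succ]; ring
  have G0 : ((3*n+n+1).factorial : ℝ) = ((4*n+1).factorial : ℝ) := by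
    norm_num [show 3*n+n+1 = 4*n+1 from by omega]
  have G1 : ((3*n+1+n+1).factorial : ℝ) = (4*(n:ℝ)+2) * ((4*n+1).factorial : ℝ) := by
    rw [show 3*n+1+n+1 = (4*n+1)+1 from by omega]
    push_cast [Nat.factorial_succ]; ring
  have G2 : ((3*n+2+n+1).factorial : ℝ)
      = (4*(n:ℝ)+3)*((4*(n:ℝ)+2) * ((4*n+1).factorial : ℝ)) := by
    rw [show 3*n+2+n+1 = ((4*n+1)+1)+1 from by omega]
    push_cast [Nat.factorial_succ]; ring
  have G3 : ((4*(n+1)).factorial : ℝ)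
      = (4*(n:ℝ)+4)*((4*(n:ℝ)+3)*((4*(n:ℝ)+2) * ((4*n+1).factorial : ℝ))) := by
    rw [show 4*(n+1) = (((4*n+1)+1)+1)+1 from by omega]
    push_cast [Nat.factorial_succ]; ring
  have FB : ((n+1).factorial : ℝ) = ((n:ℝ)+1) * (n.factorial : ℝ) := by
    push_cast [Nat.factorial_succ]; ring
  have hA : (0:ℝ) < ((3*n).factorial : ℝ) := by
    exact_mod_cast Nat.factorial_pos (3*n)
  have hB : (0:ℝ) < ((n).factorial : ℝ) := by exact_mod_cast Nat.factorial_pos n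
  have hC : (0:ℝ) < ((4*n+1).factorial : ℝ) := by exact_mod_cast Nat.factorial_pos (4*n+1)
  rw [G3, FB, F3] at hch
  have hchoose : (Nat.choose (4*(n+1)) (n+1) : ℝ)
      = ((4*(n:ℝ)+4)*((4*(n:ℝ)+3)*((4*(n:ℝ)+2) * ((4*n+1).factorial : ℝ))))
        / ((((n:ℝ)+1) * (n.factorial : ℝ))
          * ((3*(n:ℝ)+3)*((3*(n:ℝ)+2)*((3*(n:ℝ)+1) * ((3*n).factorial : ℝ))))) := by
    rw [eq_div_iff (by positivity)]
    linarith [hch]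
  rw [F1, F2, G0, G1, G2, hchoose]
  have h1 : ((n:ℝ)+1) > 0 := by positivity
  have h2 : (3*((n:ℝ)+1)-1) > 0 := by linarith
  have h3 : (3*((n:ℝ)+1)-2) > 0 := by linarith
  have h4 : ((n:ℝ)+1)*3-1 ≠ 0 := (by linarith : ((n:ℝ)+1)*3-1 > 0).ne'
  have h5 : ((n:ℝ)+1)*3-2 ≠ 0 := (by linarith : ((n:ℝ)+1)*3-2 > 0).ne'
  field_simp
  ring
lemma Qpos (t : ℝ) : 0 < 8*t^4 - 8*t^3 + 1 := by
  nlinarith [sq_nonneg (t - 3/4), sq_nonneg ((t - 3/4)*(t + 1/4)), sq_nonneg t]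

lemma int1 : ∫ t in (0:ℝ)..(1/2), 3*(2*t^2-2*t+1)/(8*t^4-8*t^3+1) = 3/2 * arctan 1 := by
  have hd : ∀ x ∈ Set.uIcc (0:ℝ) (1/2),
      HasDerivAt (fun t : ℝ => 3/2 * arctan ((2*t-2*t^2)/(1-2*t^2)))
        (3*(2*x^2-2*x+1)/(8*x^4-8*x^3+1)) x := by
    intro x hx
    rw [Set.uIcc_of_le (by norm_num : (0:ℝ) ≤ 1/2)] at hx
    have hB : (1 - 2*x^2) ≠ 0 := by
      have := hx.1; have := hx.2; nlinarith
    have hA : HasDerivAt (fun t : ℝ => 2*t-2*t^2) (2 - 4*x) x := by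
      have h := ((hasDerivAt_id' x).const_mul (2:ℝ)).sub (((hasDerivAt_pow 2 x)).const_mul (2:ℝ))
      refine h.congr_deriv ?_
      push_cast
      ring
    have hBd : HasDerivAt (fun t : ℝ => 1-2*t^2) (-(4*x)) x := by
      have h := ((hasDerivAt_pow 2 x).const_mul (2:ℝ)).const_sub 1
      refine h.congr_deriv ?_
      push_cast
      ring
    have hu := hA.div hBd hB
    have harc := (Real.hasDerivAt_arctan ((2*x-2*x^2)/(1-2*x^2))).comp x hu
    have := harc.const_mul (3/2 : ℝ)
    refine this.congr_deriv ?_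
    have hQ := Qpos x
    have h1 : (1 - 2*x^2)^2 ≠ 0 := pow_ne_zero 2 hB
    have hQ' := hQ.ne'
    have e : 1 + ((2*x-2*x^2)/(1-2*x^2))^2 = (8*x^4-8*x^3+1)/(1-2*x^2)^2 := by
      rw [eq_div_iff h1, add_mul, div_pow, div_mul_cancel₀ _ h1]; ring
    rw [e]
    field_simp
    ring
  rw [integral_eq_sub_of_hasDerivAt hd]
  · norm_num [Real.arctan_zero]
  · apply Continuous.intervalIntegrable
    apply Continuous.div (by continuity) (by continuity)
    intro x; exact ne_of_gt (Qpos x)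

lemma int2 : ∫ t in (1/2:ℝ)..1, 3*(2*t^2-2*t+1)/(8*t^4-8*t^3+1)
    = 3/2 * (arctan 2 + arctan 3) := by
  have hd : ∀ x ∈ Set.uIcc (1/2:ℝ) 1,
      HasDerivAt (fun t : ℝ => 3/2 * arctan ((-6*t^2+2*t+2)/(2*t^2-4*t+1)))
        (3*(2*x^2-2*x+1)/(8*x^4-8*x^3+1)) x := by
    intro x hx
    rw [Set.uIcc_of_le (by norm_num : (1/2:ℝ) ≤ 1)] at hx
    have hB : (2*x^2-4*x+1) ≠ 0 := by
      have h1 := hx.1; have h2 := hx.2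
      nlinarith [mul_nonneg (by linarith : (0:ℝ) ≤ x - 1/2) (by linarith : (0:ℝ) ≤ 1 - x)]
    have hA : HasDerivAt (fun t : ℝ => -6*t^2+2*t+2) (-12*x + 2) x := by
      have h := ((((hasDerivAt_pow 2 x)).const_mul (-6:ℝ)).add
        ((hasDerivAt_id' x).const_mul (2:ℝ))).add_const (2:ℝ)
      refine h.congr_deriv ?_
      push_cast
      ring
    have hBd : HasDerivAt (fun t : ℝ => 2*t^2-4*t+1) (4*x - 4) x := by
      have h := ((((hasDerivAt_pow 2 x)).const_mul (2:ℝ)).sub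
        ((hasDerivAt_id' x).const_mul (4:ℝ))).add_const (1:ℝ)
      refine h.congr_deriv ?_
      push_cast
      ring
    have hu := hA.div hBd hB
    have harc := (Real.hasDerivAt_arctan _).comp x hu
    have := harc.const_mul (3/2 : ℝ)
    refine this.congr_deriv ?_
    have hQ := Qpos x
    have h1 : (2*x^2-4*x+1)^2 ≠ 0 := pow_ne_zero 2 hB
    have hQ' := hQ.ne'
    simp only [Pi.div_apply]
    have e : 1 + ((-6*x^2+2*x+2)/(2*x^2-4*x+1))^2 = 5*(8*x^4-8*x^3+1)/(2*x^2-4*x+1)^2 := by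
      rw [eq_div_iff h1, add_mul, div_pow, div_mul_cancel₀ _ h1]; ring
    rw [e]
    rw [one_div_div, div_mul_div_comm, mul_comm ((2 * x ^ 2 - 4 * x + 1) ^ 2), mul_div_mul_right _ _ h1]
    field_simp
    ring
  rw [integral_eq_sub_of_hasDerivAt hd]
  · norm_num
    ring
  · apply Continuous.intervalIntegrable
    apply Continuous.div (by continuity) (by continuity)
    intro x; exact ne_of_gt (Qpos x)

lemma final_integral : ∫ t in (0:ℝ)..1, 3*(2*t^2-2*t+1)/(8*t^4-8*t^3+1) = 3*π/2 := by
  have hint : ∀ a b : ℝ, IntervalIntegrable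
      (fun t : ℝ => 3*(2*t^2-2*t+1)/(8*t^4-8*t^3+1)) MeasureTheory.volume a b := by
    intro a b
    apply Continuous.intervalIntegrable
    apply Continuous.div (by continuity) (by continuity)
    intro x; exact ne_of_gt (Qpos x)
  rw [← integral_add_adjacent_intervals (hint 0 (1/2)) (hint (1/2) 1), int1, int2]
  have h23 : arctan 2 + arctan 3 = 3*π/4 := by
    rw [Real.arctan_add_eq_add_pi (by norm_num) (by norm_num)]
    norm_num
    linarith
  rw [h23, Real.arctan_one]
  ring
theorem stmt_17 :
    HasSum (fun n : ℕ =>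
      (5*((n:ℝ)+1)^2 - 4*((n:ℝ)+1) + 1) * 8^(n+1) /
        (((n:ℝ)+1)*(3*((n:ℝ)+1)-1)*(3*((n:ℝ)+1)-2) * (Nat.choose (4*(n+1)) (n+1) : ℝ)))
      (3*Real.pi/2) := by
  set μ := MeasureTheory.volume.restrict (Set.Ioc (0:ℝ) 1) with hμ
  set F : ℕ → ℝ → ℝ := fun n t => 8^(n+1) * (t^3*(1-t))^n * (3/8 - 3/4*t + 3/4*t^2) with hF
  have hcont : ∀ n, Continuous (F n) := by intro n; rw [hF]; continuity
  have hF_int : ∀ n, Integrable (F n) μ := fun n => (hcont n).integrableOn_Ioc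
  have hbound : ∀ n, ∀ t ∈ Set.Ioc (0:ℝ) 1, ‖F n t‖ ≤ 3*(27/32)^n := by
    intro n t ht
    obtain ⟨ht0, ht1⟩ := ht
    have hp0 : (0:ℝ) ≤ 3/8 - 3/4*t + 3/4*t^2 := by nlinarith [sq_nonneg (2*t-1)]
    have hw0 : (0:ℝ) ≤ t^3*(1-t) := mul_nonneg (by positivity) (by linarith)
    have hFn : (0:ℝ) ≤ F n t := by
      rw [hF]
      exact mul_nonneg (mul_nonneg (by positivity) (pow_nonneg hw0 n)) hp0
    rw [Real.norm_eq_abs, abs_of_nonneg hFn, hF]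
    have hw : t^3*(1-t) ≤ 27/256 := by nlinarith [sq_nonneg (t-3/4), sq_nonneg ((t-3/4)*(t+1/4))]
    have hp : 3/8 - 3/4*t + 3/4*t^2 ≤ 3/8 := by nlinarith
    have h1 : (t^3*(1-t))^n ≤ (27/256)^n := pow_le_pow_left₀ hw0 hw n
    calc 8^(n+1) * (t^3*(1-t))^n * (3/8 - 3/4*t + 3/4*t^2)
        ≤ 8^(n+1) * (27/256)^n * (3/8) := by
          apply mul_le_mul (by apply mul_le_mul_of_nonneg_left h1 (by positivity)) hp hp0
            (by positivity)
      _ = 3*(27/32)^n := by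
          rw [show ((27:ℝ)/32) = (27/256)*8 by norm_num, mul_pow, pow_succ]
          ring
  have hnorm : ∀ n, ∫ t, ‖F n t‖ ∂μ ≤ 3*(27/32)^n := by
    intro n
    have h1 : ∫ t, ‖F n t‖ ∂μ ≤ ∫ _t in Set.Ioc (0:ℝ) 1, (3*(27/32)^n : ℝ) := by
      apply MeasureTheory.setIntegral_mono_on (hF_int n).norm (integrable_const _)
        measurableSet_Ioc
      exact hbound n
    simpa [Real.volume_Ioc] using h1
  have hsum : Summable (fun n => ∫ t, ‖F n t‖ ∂μ) := by
    apply Summable.of_nonneg_of_le (fun n => integral_nonneg (fun t => norm_nonneg _)) hnorm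
    exact ((summable_geometric_of_lt_one (by norm_num) (by norm_num : (27:ℝ)/32 < 1)).mul_left 3)
  have H := MeasureTheory.hasSum_integral_of_summable_integral_norm hF_int hsum
  have htsum : ∀ t ∈ Set.Ioc (0:ℝ) 1, (∑' n, F n t) = 3*(2*t^2-2*t+1)/(8*t^4-8*t^3+1) := by
    intro t ht
    obtain ⟨ht0, ht1⟩ := ht
    have hw0 : (0:ℝ) ≤ 8*(t^3*(1-t)) := by
      have := mul_nonneg (pow_nonneg ht0.le 3) (by linarith : (0:ℝ) ≤ 1 - t)
      linarith
    have hQ := Qpos t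
    have hw1 : 8*(t^3*(1-t)) < 1 := by nlinarith
    have hgeom := hasSum_geometric_of_lt_one hw0 hw1
    have h2 := hgeom.mul_right (8 * (3/8 - 3/4*t + 3/4*t^2))
    have h3 : HasSum (fun n => F n t)
        ((1 - 8*(t^3*(1-t)))⁻¹ * (8 * (3/8 - 3/4*t + 3/4*t^2))) := by
      refine h2.congr_fun ?_
      intro n
      rw [hF]
      show 8^(n+1) * (t^3*(1-t))^n * (3/8 - 3/4*t + 3/4*t^2)
        = (8*(t^3*(1-t)))^n * (8 * (3/8 - 3/4*t + 3/4*t^2))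
      rw [mul_pow 8 (t^3*(1-t)) n, pow_succ]
      ring
    rw [h3.tsum_eq]
    have hne : (1 - 8*(t^3*(1-t))) ≠ 0 := by nlinarith
    field_simp
    ring
  have hI : ∫ t, (∑' n, F n t) ∂μ = 3*Real.pi/2 := by
    rw [hμ]
    rw [MeasureTheory.setIntegral_congr_fun measurableSet_Ioc htsum]
    rw [← intervalIntegral.integral_of_le (by norm_num : (0:ℝ) ≤ 1)]
    exact final_integral
  rw [hI] at H
  refine H.congr_fun ?_
  intro n
  rw [term_eq n, intervalIntegral.integral_of_le (by norm_num : (0:ℝ) ≤ 1)]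
end
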